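/- Suppose critical values 0 < α_{1:n} ≤ … ≤ α_{n:n} < 1 satisfy that j ↦ α_{j:n}/j is non-decreasing, and the step-up test satisfies FDR ≤ α for all distributions in the BI model with N = n₀ true i.i.d. uniform p-values (all choices of n₀ and false p-values). If the identity E(V/γ(R)) = n₀/n holds (γ(i) = nα_{i:n}), then α_{j:n} ≤ jα/(n+1−j) for all 1 ≤ j ≤ n. -/

import Mathlib

open MeasureTheory ProbabilityTheory Finset
open scoped Classical

/-- Number of rejections `R` of the step-up test with critical values `αc 1 ≤ … ≤ αc n`:
`R = max{i ∈ {1,…,n} : p_{i:n} ≤ αc i} = max{i : #{j : p_j ≤ αc i} ≥ i}` (`0` if empty). -/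
noncomputable def numRej {Ω ι : Type*} [Fintype ι] (n : ℕ) (αc : ℕ → ℝ)
    (q : ι → Ω → ℝ) (ω : Ω) : ℕ :=
  ((Finset.Icc 1 n).filter fun i =>
    i ≤ (Finset.univ.filter fun j => q j ω ≤ αc i).card).sup id

/-- Number `V` of falsely rejected true hypotheses: true `p`-values `≤ αc (max R 1)`
(with the convention `α_{0:n} = α_{1:n}`). -/
noncomputable def numFalseRej {Ω ι : Type*} [Fintype ι] (n : ℕ) (αc : ℕ → ℝ)
    (q : ι → Ω → ℝ) (T : Finset ι) (ω : Ω) : ℕ :=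
  (T.filter fun j => q j ω ≤ αc (max (numRej n αc q ω) 1)).card

/-!
Take `n + 1 - j` true hypotheses with i.i.d. uniform `p`-values and let the other `j - 1`
`p`-values be `0`. Then a single false rejection already gives `j` `p`-values below `α_{j:n}`,
so `V > 0` forces `R ≥ j`, and since `i ↦ α_{i:n}/i` is non-decreasing,
`V/R ≥ (n α_{j:n}/j) · V/γ(R)` pointwise. Taking expectations and using `E(V/γ(R)) = n₀/n`
gives `a ≥ FDR ≥ α_{j:n} (n + 1 - j)/j`.
-/

section StepUp

variable {Ω ι : Type*} [Fintype ι] {n : ℕ} {αc : ℕ → ℝ} {q : ι → Ω → ℝ}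

lemma numRej_le (ω : Ω) : numRej n αc q ω ≤ n :=
  Finset.sup_le fun _ hi => (Finset.mem_Icc.mp (Finset.mem_filter.mp hi).1).2

lemma le_numRej {i : ℕ} {ω : Ω} (hi : i ∈ Finset.Icc 1 n) (h : i ≤ #{j | q j ω ≤ αc i}) :
    i ≤ numRej n αc q ω :=
  Finset.le_sup (f := id) (Finset.mem_filter.mpr ⟨hi, h⟩)

lemma numRej_eq_sup (ω : Ω) :
    numRej n αc q ω = (Finset.Icc 1 n).sup fun i => if i ≤ #{j | q j ω ≤ αc i} then i else 0 := by
  simp only [numRej, Finset.sup_ite, not_le, Finset.sup_le_iff, Finset.mem_filter, zero_le,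
    implies_true, sup_of_le_left]
  rfl

lemma numFalseRej_le_card (T : Finset ι) (ω : Ω) : numFalseRej n αc q T ω ≤ #T :=
  Finset.card_filter_le _ _

lemma le_numRej_of_numFalseRej_pos (hmono : MonotoneOn αc (Set.Icc 1 n)) {j : ℕ}
    (hj : j ∈ Finset.Icc 1 n) {T : Finset ι} (hT : j + #T ≤ Fintype.card ι + 1) {ω : Ω}
    (hfalse : ∀ i ∉ T, q i ω ≤ αc j) (hV : 0 < numFalseRej n αc q T ω) :
    j ≤ numRej n αc q ω := by
  obtain ⟨hj1, hjn⟩ := Finset.mem_Icc.mp hj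
  by_contra! hR
  obtain ⟨t, ht⟩ := Finset.card_pos.mp hV
  obtain ⟨htT, htq⟩ := Finset.mem_filter.mp ht
  have hcrit : αc (max (numRej n αc q ω) 1) ≤ αc j :=
    hmono ⟨le_max_right _ _, by omega⟩ ⟨hj1, hjn⟩ (by omega)
  have hsub : insert t Tᶜ ⊆ ({i | q i ω ≤ αc j} : Finset ι) := by
    intro i hi
    rcases Finset.mem_insert.mp hi with rfl | hi
    · simpa using htq.trans hcrit
    · simpa using hfalse i (Finset.mem_compl.mp hi)
  have hcard : #(insert t Tᶜ) = #Tᶜ + 1 :=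
    Finset.card_insert_of_notMem (by simpa using htT)
  have hcount : j ≤ #{i | q i ω ≤ αc j} := by
    have := Finset.card_le_card hsub
    rw [hcard, Finset.card_compl] at this
    have := Finset.card_le_univ T
    omega
  have := le_numRej hj hcount
  omega

variable [MeasurableSpace Ω]

lemma measurable_card_filter_le (hq : ∀ j, Measurable (q j)) (c : ℝ) :
    Measurable fun ω => #{j | q j ω ≤ c} := by
  simp_rw [Finset.card_filter]
  exact Finset.measurable_sum _ fun j _ =>
    Measurable.ite (measurableSet_le (hq j) measurable_const) measurable_const measurable_const

lemma measurable_numRej (hq : ∀ j, Measurable (q j)) : Measurable (numRej n αc q) := by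
  have : numRej n αc q =
      (Finset.Icc 1 n).sup fun i ω => if i ≤ #{j | q j ω ≤ αc i} then i else 0 := by
    ext ω; rw [numRej_eq_sup, Finset.sup_apply]
  rw [this]
  exact Finset.sup_induction measurable_const (fun _ hf _ hg => hf.sup hg)
    fun i _ => (measurable_from_nat (f := fun k => if i ≤ k then i else 0)).comp
      (measurable_card_filter_le hq (αc i))

lemma measurable_numFalseRej (hq : ∀ j, Measurable (q j)) (T : Finset ι) :
    Measurable (numFalseRej n αc q T) := by
  have hcrit : Measurable fun ω => αc (max (numRej n αc q ω) 1) :=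
    (measurable_from_nat (f := fun k => αc (max k 1))).comp (measurable_numRej hq)
  unfold numFalseRej
  simp_rw [Finset.card_filter]
  exact Finset.measurable_sum _ fun j _ =>
    Measurable.ite (measurableSet_le (hq j) hcrit) measurable_const measurable_const

lemma integrable_numFalseRej_div_numRej (μ : Measure Ω) [IsFiniteMeasure μ]
    (hq : ∀ j, Measurable (q j)) (T : Finset ι) :
    Integrable (fun ω => (numFalseRej n αc q T ω : ℝ) / numRej n αc q ω) μ := by
  refine Integrable.of_bound (Measurable.aestronglyMeasurable ?_) #T
    (Filter.Eventually.of_forall fun ω => ?_)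
  · exact (measurable_from_prod_countable_left (f := fun p : ℕ × ℕ => (p.1 : ℝ) / p.2)
      fun _ => measurable_from_nat).comp
        ((measurable_numFalseRej hq T).prodMk (measurable_numRej hq))
  · rw [Real.norm_of_nonneg (by positivity)]
    calc (numFalseRej n αc q T ω : ℝ) / numRej n αc q ω ≤ numFalseRej n αc q T ω :=
          div_nat_le_self_of_nonnneg (Nat.cast_nonneg _) _
      _ ≤ #T := by exact_mod_cast numFalseRej_le_card T ω

end StepUp

lemma crit_ratio_mul_le_div {n : ℕ} {αc : ℕ → ℝ} (hαpos : ∀ i ∈ Finset.Icc 1 n, 0 < αc i)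
    (hratio : ∀ i j, 1 ≤ i → i ≤ j → j ≤ n → αc i / i ≤ αc j / j) {j r v : ℕ} (hj1 : 1 ≤ j)
    (hrn : r ≤ n) (hjr : 0 < v → j ≤ r) :
    n * αc j / j * (v / (n * αc (max r 1))) ≤ v / r := by
  rcases Nat.eq_zero_or_pos v with rfl | hv
  · simp
  have hjr := hjr hv
  have hr1 : max r 1 = r := max_eq_left (hj1.trans hjr)
  have hn : (0 : ℝ) < n := by exact_mod_cast (hj1.trans (hjr.trans hrn))
  have hαr : 0 < αc r := hαpos r (Finset.mem_Icc.mpr ⟨hj1.trans hjr, hrn⟩)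
  calc n * αc j / j * (v / (n * αc (max r 1))) = αc j / j * v / αc r := by
        rw [hr1]; field_simp
    _ ≤ αc r / r * v / αc r := by
        gcongr ?_ * _ / _
        exact hratio j r hj1 hjr hrn
    _ = v / r := by field_simp

instance : IsProbabilityMeasure (volume.restrict (Set.Ioo (0 : ℝ) 1)) :=
  ⟨by simp⟩

section DiracUniform

variable {ι : Type*} (T : Finset ι)

noncomputable def diracUniform (i : ι) (ω : ι → ℝ) : ℝ := if i ∈ T then ω i else 0

lemma diracUniform_of_mem {i : ι} (hi : i ∈ T) : diracUniform T i = fun ω => ω i := by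
  funext ω; simp [diracUniform, hi]

lemma measurable_diracUniform (i : ι) : Measurable (diracUniform T i) :=
  Measurable.ite (MeasurableSet.const _) (measurable_pi_apply i) measurable_const

variable [Fintype ι] (ν : Measure ℝ) [IsProbabilityMeasure ν]

lemma map_diracUniform {i : ι} (hi : i ∈ T) :
    (Measure.pi fun _ : ι => ν).map (diracUniform T i) = ν := by
  rw [diracUniform_of_mem T hi]
  exact (measurePreserving_eval _ i).map_eq

lemma iIndepFun_diracUniform :
    iIndepFun (fun i : {j // j ∈ T} => diracUniform T i) (Measure.pi fun _ : ι => ν) := by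
  have := (iIndepFun_pi (μ := fun _ : ι => ν) (X := fun _ => id)
    fun _ => aemeasurable_id).precomp Subtype.val_injective (g := fun i : {j // j ∈ T} => i.1)
  simpa [diracUniform_of_mem T (Subtype.prop _)] using this

lemma indepFun_diracUniform :
    IndepFun (fun ω (i : {j // j ∈ T}) => diracUniform T i ω)
      (fun ω (j : {j // j ∉ T}) => diracUniform T j ω) (Measure.pi fun _ : ι => ν) := by
  have : (fun ω (j : {j // j ∉ T}) => diracUniform T j ω) = fun _ _ => 0 := by
    funext ω j; simp [diracUniform, j.2]
  rw [this]
  exact indepFun_const_right _ _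

end DiracUniform

lemma diracUniform_mul_integral_le_integral_numFalseRej_div_numRej {ι : Type*} [Fintype ι]
    {n j : ℕ} {αc : ℕ → ℝ} (hj : j ∈ Finset.Icc 1 n) (hαpos : ∀ i ∈ Finset.Icc 1 n, 0 < αc i)
    (hmono : MonotoneOn αc (Set.Icc 1 n))
    (hratio : ∀ i j, 1 ≤ i → i ≤ j → j ≤ n → αc i / i ≤ αc j / j)
    {T : Finset ι} (hT : j + #T ≤ Fintype.card ι + 1) (μ : Measure (ι → ℝ)) [IsFiniteMeasure μ] :
    n * αc j / j * ∫ ω, (numFalseRej n αc (diracUniform T) T ω : ℝ)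
        / (n * αc (max (numRej n αc (diracUniform T) ω) 1)) ∂μ
      ≤ ∫ ω, (numFalseRej n αc (diracUniform T) T ω : ℝ) / numRej n αc (diracUniform T) ω ∂μ := by
  obtain ⟨hj1, hjn⟩ := Finset.mem_Icc.mp hj
  have hVR (ω : ι → ℝ) : 0 < numFalseRej n αc (diracUniform T) T ω →
      j ≤ numRej n αc (diracUniform T) ω :=
    le_numRej_of_numFalseRej_pos hmono hj hT fun i hi => by
      simp [diracUniform, hi, (hαpos j hj).le]
  rw [← integral_const_mul]
  refine integral_mono_of_nonneg (Filter.Eventually.of_forall fun ω => ?_)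
    (integrable_numFalseRej_div_numRej μ (measurable_diracUniform T) T)
    (Filter.Eventually.of_forall fun ω =>
      crit_ratio_mul_le_div hαpos hratio hj1 (numRej_le ω) (hVR ω))
  have hR : max (numRej n αc (diracUniform T) ω) 1 ∈ Finset.Icc 1 n :=
    Finset.mem_Icc.mpr ⟨le_max_right _ 1, max_le (numRej_le ω) (hj1.trans hjn)⟩
  have := hαpos _ hR
  have := hαpos j hj
  positivity

theorem necessary_condition_critical_values_general
    (n : ℕ) (a : ℝ)
    (αc : ℕ → ℝ) (hpos : 0 < αc 1)
    (hmono : ∀ i j, 1 ≤ i → i ≤ j → j ≤ n → αc i ≤ αc j)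
    (hratio : ∀ i j, 1 ≤ i → i ≤ j → j ≤ n → αc i / i ≤ αc j / j)
    (hall : ∀ (Ω : Type) (_ : MeasurableSpace Ω) (μ : Measure Ω),
      IsProbabilityMeasure μ →
      ∀ (q : Fin n → Ω → ℝ), (∀ j, Measurable (q j)) →
      ∀ (T : Finset (Fin n)) (n₀ : ℕ), T.card = n₀ →
      (∀ i ∈ T, μ.map (q i) = volume.restrict (Set.Ioo 0 1)) →
      iIndepFun
        (fun i : {j : Fin n // j ∈ T} => q i) μ →
      IndepFun (fun ω (i : {j : Fin n // j ∈ T}) => q i ω)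
        (fun ω (j : {j : Fin n // j ∉ T}) => q j ω) μ →
      (∫ ω, (numFalseRej n αc q T ω : ℝ) / (numRej n αc q ω : ℝ) ∂μ ≤ a) ∧
      (∫ ω, (numFalseRej n αc q T ω : ℝ)
          / ((n : ℝ) * αc (max (numRej n αc q ω) 1)) ∂μ = (n₀ : ℝ) / n)) :
    ∀ j, 1 ≤ j → j ≤ n → αc j ≤ (j : ℝ) * a / ((n : ℝ) + 1 - j) := by
  intro j hj1 hjn
  have hj : j ∈ Finset.Icc 1 n := Finset.mem_Icc.mpr ⟨hj1, hjn⟩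
  have hαpos : ∀ i ∈ Finset.Icc 1 n, 0 < αc i := fun i hi =>
    hpos.trans_le (hmono 1 i le_rfl (Finset.mem_Icc.mp hi).1 (Finset.mem_Icc.mp hi).2)
  obtain ⟨T, -, hT⟩ := Finset.exists_subset_card_eq (s := (Finset.univ : Finset (Fin n)))
    (n := n + 1 - j) (by simp only [Finset.card_univ, Fintype.card_fin]; omega)
  set μ := Measure.pi fun _ : Fin n => volume.restrict (Set.Ioo (0 : ℝ) 1)
  obtain ⟨hFDR, hE⟩ := hall _ _ μ inferInstance
    (diracUniform T) (measurable_diracUniform T) T _ hT (fun _ hi => map_diracUniform T _ hi)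
    (iIndepFun_diracUniform T _) (indepFun_diracUniform T _)
  have hbound := (diracUniform_mul_integral_le_integral_numFalseRej_div_numRej hj hαpos
    (fun i hi k hk hik => hmono i k hi.1 hik hk.2) hratio (by rw [hT, Fintype.card_fin]; omega)
    μ).trans hFDR
  have hj0 : (0 : ℝ) < j := by exact_mod_cast hj1
  have hjn' : (j : ℝ) ≤ n := by exact_mod_cast hjn
  have hn0 : (n : ℝ) ≠ 0 := by linarith
  have hn₀ : n * αc j / j * (((n + 1 - j : ℕ) : ℝ) / n) = αc j * (n + 1 - j) / j := by
    rw [Nat.cast_sub (by omega)]; push_cast; field_simp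
  rw [hE, hn₀, div_le_iff₀ hj0] at hbound
  rw [le_div_iff₀ (by linarith)]
  linarith

/-- Necessary condition: if `j ↦ α_{j:n}/j` is non-decreasing and the step-up test controls
`FDR ≤ a` in every BI model (in which also the identity `E(V/γ(R)) = n₀/n` holds), then
`α_{j:n} ≤ jα/(n+1−j)` for all `1 ≤ j ≤ n`. -/
theorem necessary_condition_critical_values
    (n : ℕ) (hn : 0 < n) (a : ℝ) (ha0 : 0 < a) (ha1 : a < 1)
    (αc : ℕ → ℝ) (hpos : 0 < αc 1) (hlt : αc n < 1)
    (hmono : ∀ i j, 1 ≤ i → i ≤ j → j ≤ n → αc i ≤ αc j)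
    (hratio : ∀ i j, 1 ≤ i → i ≤ j → j ≤ n → αc i / i ≤ αc j / j)
    (hall : ∀ (Ω : Type) (_ : MeasurableSpace Ω) (μ : Measure Ω),
      IsProbabilityMeasure μ →
      ∀ (q : Fin n → Ω → ℝ), (∀ j, Measurable (q j)) →
      ∀ (T : Finset (Fin n)) (n₀ : ℕ), T.card = n₀ →
      (∀ i ∈ T, μ.map (q i) = volume.restrict (Set.Ioo 0 1)) →
      iIndepFun
        (fun i : {j : Fin n // j ∈ T} => q i) μ →
      IndepFun (fun ω (i : {j : Fin n // j ∈ T}) => q i ω)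
        (fun ω (j : {j : Fin n // j ∉ T}) => q j ω) μ →
      (∫ ω, (numFalseRej n αc q T ω : ℝ) / (numRej n αc q ω : ℝ) ∂μ ≤ a) ∧
      (∫ ω, (numFalseRej n αc q T ω : ℝ)
          / ((n : ℝ) * αc (max (numRej n αc q ω) 1)) ∂μ = (n₀ : ℝ) / n)) :
    ∀ j, 1 ≤ j → j ≤ n → αc j ≤ (j : ℝ) * a / ((n : ℝ) + 1 - j) :=
  necessary_condition_critical_values_general n a αc hpos hmono hratio hall
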